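/- arXiv:1301.4830 — 3 statements merged into one kernel-verified Lean document; each statement's English description precedes it below -/
import Mathlib

section
/- Let (Ω, Σ, μ) be a σ-finite measure space, Φ₁, Φ₂ Young functions, φ: Ω → Ω a nonsingular measurable transformation with Radon–Nikodym derivative h = d(μ∘φ⁻¹)/dμ. Suppose there exist constants a, b > 0 and a nonnegative g ∈ L¹(μ) such that Φ₂(a·u)·h(t) ≤ b·Φ₁(u) + g(t) for all u > 0 and μ-almost every t ∈ Ω. Then C_φ: L^{Φ₁}(μ) → L^{Φ₂}(μ), f ↦ f∘φ, is a bounded linear operator; in fact N_{Φ₂}(f∘φ) ≤ (M'/a)·N_{Φ₁}(f) where M' = max(1, b + ∫ g dμ). -/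
open MeasureTheory Filter Set
open scoped ENNReal

/-- A Young function: continuous, convex on `[0,∞)`, nonnegative, vanishing exactly at `0`,
tending to `∞` and superlinear at `∞`. -/
def IsYoung (Φ : ℝ → ℝ) : Prop :=
  Continuous Φ ∧ ConvexOn ℝ (Ici 0) Φ ∧ (∀ x, 0 ≤ Φ x) ∧
  (∀ x, 0 ≤ x → (Φ x = 0 ↔ x = 0)) ∧
  Tendsto Φ atTop atTop ∧ Tendsto (fun x => Φ x / x) atTop atTop

/-- The Orlicz modular `∫ Φ(|f|) dμ` (as an extended real). -/
noncomputable def orliczModular {Ω : Type*} [MeasurableSpace Ω] (Φ : ℝ → ℝ)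
    (μ : Measure Ω) (f : Ω → ℂ) : ℝ≥0∞ :=
  ∫⁻ x, ENNReal.ofReal (Φ ‖f x‖) ∂μ

/-- Membership in the Orlicz space `L^Φ(μ)`. -/
def MemOrlicz {Ω : Type*} [MeasurableSpace Ω] (Φ : ℝ → ℝ) (μ : Measure Ω)
    (f : Ω → ℂ) : Prop :=
  Measurable f ∧ ∃ k : ℝ, 0 < k ∧ orliczModular Φ μ (fun x => (k : ℂ) * f x) < ⊤

/-- The Luxemburg norm `N_Φ(f) = inf {k > 0 : ∫ Φ(|f|/k) dμ ≤ 1}`. -/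
noncomputable def luxNorm {Ω : Type*} [MeasurableSpace Ω] (Φ : ℝ → ℝ)
    (μ : Measure Ω) (f : Ω → ℂ) : ℝ :=
  sInf {k : ℝ | 0 < k ∧ orliczModular Φ μ (fun x => f x / (k : ℂ)) ≤ 1}

/-- An atom of the measure `μ`. -/
def IsMeasAtom {Ω : Type*} [MeasurableSpace Ω] (μ : Measure Ω) (A : Set Ω) : Prop :=
  MeasurableSet A ∧ 0 < μ A ∧ ∀ F, F ⊆ A → MeasurableSet F → μ F = 0 ∨ μ F = μ A

/-- `N` is a union of finitely many atoms of `μ`. -/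
def FinUnionAtoms {Ω : Type*} [MeasurableSpace Ω] (μ : Measure Ω) (N : Set Ω) : Prop :=
  ∃ (n : ℕ) (C : Fin n → Set Ω), (∀ i, IsMeasAtom μ (C i)) ∧ N = ⋃ i, C i

/-- Sequential compactness of an operator `T` between the Orlicz spaces
`L^{Φ₁}(μ)` and `L^{Φ₂}(μ)`: the image of the unit ball is totally bounded,
expressed via extraction of Cauchy subsequences. -/
def CompactOp {Ω : Type*} [MeasurableSpace Ω] (Φ₁ Φ₂ : ℝ → ℝ) (μ : Measure Ω)
    (T : (Ω → ℂ) → (Ω → ℂ)) : Prop :=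
  ∀ f : ℕ → Ω → ℂ, (∀ n, MemOrlicz Φ₁ μ (f n) ∧ luxNorm Φ₁ μ (f n) ≤ 1) →
    ∃ g : ℕ → ℕ, StrictMono g ∧
      ∀ ε : ℝ, 0 < ε → ∃ N : ℕ, ∀ m, N ≤ m → ∀ n, N ≤ n →
        luxNorm Φ₂ μ (fun x => T (f (g m)) x - T (f (g n)) x) ≤ ε


section Helpers

variable {Ω : Type*} [MeasurableSpace Ω]

lemma isYoung_zero {Φ : ℝ → ℝ} (hΦ : IsYoung Φ) : Φ 0 = 0 :=
  (hΦ.2.2.2.1 0 le_rfl).mpr rfl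

lemma isYoung_scale {Φ : ℝ → ℝ} (hΦ : IsYoung Φ) {x c : ℝ} (hx : 0 ≤ x)
    (hc0 : 0 ≤ c) (hc1 : c ≤ 1) : Φ (c * x) ≤ c * Φ x := by
  have h := hΦ.2.1.2 (self_mem_Ici (a := (0:ℝ))) (hx : x ∈ Ici 0)
    (by linarith : (0:ℝ) ≤ 1 - c) hc0 (by ring)
  simpa [isYoung_zero hΦ, smul_eq_mul] using h

lemma lintegral_comp_eq {μ : Measure Ω} {φ : Ω → Ω} (hφ : Measurable φ)
    {h : Ω → ℝ} (hh : Measurable h)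
    (hRN : ∀ A : Set Ω, MeasurableSet A →
      μ (φ ⁻¹' A) = ∫⁻ x in A, ENNReal.ofReal (h x) ∂μ)
    {F : Ω → ℝ≥0∞} (hF : Measurable F) :
    ∫⁻ x, F (φ x) ∂μ = ∫⁻ x, ENNReal.ofReal (h x) * F x ∂μ := by
  have hmap : μ.map φ = μ.withDensity (fun x => ENNReal.ofReal (h x)) := by
    ext s hs
    rw [Measure.map_apply hφ hs, withDensity_apply _ hs, hRN s hs]
  rw [← lintegral_map hF hφ, hmap,
    lintegral_withDensity_eq_lintegral_mul _ (hh.ennreal_ofReal) hF]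
  simp [Pi.mul_apply]

lemma exists_scale_le_one {μ : Measure Ω} {Φ : ℝ → ℝ} (hΦ : IsYoung Φ) {f : Ω → ℂ}
    {k₀ : ℝ} (hk₀ : 0 < k₀)
    (hfin : orliczModular Φ μ (fun x => (k₀ : ℂ) * f x) < ⊤) :
    ∃ K : ℝ, 0 < K ∧ orliczModular Φ μ (fun x => f x / (K : ℂ)) ≤ 1 := by
  set T := orliczModular Φ μ (fun x => (k₀ : ℂ) * f x) with hT
  set lam : ℝ := max 1 T.toReal with hlam
  have hlam1 : 1 ≤ lam := le_max_left _ _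
  have hlam0 : 0 < lam := lt_of_lt_of_le one_pos hlam1
  refine ⟨lam / k₀, div_pos hlam0 hk₀, ?_⟩
  have key : ∀ x : Ω, ENNReal.ofReal (Φ (‖f x / ((lam / k₀ : ℝ) : ℂ)‖)) ≤
      ENNReal.ofReal (1 / lam) * ENNReal.ofReal (Φ (‖(k₀ : ℂ) * f x‖)) := by
    intro x
    rw [← ENNReal.ofReal_mul (by positivity)]
    apply ENNReal.ofReal_le_ofReal
    have habs : ‖f x / ((lam / k₀ : ℝ) : ℂ)‖ =
        1 / lam * ‖(k₀ : ℂ) * f x‖ := by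
      rw [norm_div, norm_mul, Complex.norm_real, Complex.norm_real, Real.norm_eq_abs, Real.norm_eq_abs,
        abs_of_pos (div_pos hlam0 hk₀), abs_of_pos hk₀]
      field_simp
    rw [habs]
    exact isYoung_scale hΦ (by positivity) (by positivity)
      ((div_le_one hlam0).mpr hlam1)
  calc orliczModular Φ μ (fun x => f x / ((lam / k₀ : ℝ) : ℂ))
      ≤ ∫⁻ x, ENNReal.ofReal (1 / lam) *
          ENNReal.ofReal (Φ (‖(k₀ : ℂ) * f x‖)) ∂μ :=
        lintegral_mono key
    _ = ENNReal.ofReal (1 / lam) * T :=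
        lintegral_const_mul' _ _ ENNReal.ofReal_ne_top
    _ ≤ ENNReal.ofReal (1 / lam) * ENNReal.ofReal lam := by
        gcongr
        rw [← ENNReal.ofReal_toReal hfin.ne]
        exact ENNReal.ofReal_le_ofReal (le_max_right _ _)
    _ = 1 := by
        rw [← ENNReal.ofReal_mul (by positivity), one_div_mul_cancel hlam0.ne',
          ENNReal.ofReal_one]

end Helpers

/-- A sufficient condition for boundedness of the composition operator, with the
explicit norm bound `N_{Φ₂}(f∘φ) ≤ (M'/a) N_{Φ₁}(f)`, `M' = max 1 (b + ∫ g)`. -/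
theorem stmt1 {Ω : Type*} [MeasurableSpace Ω] (μ : Measure Ω) [SigmaFinite μ]
    (Φ₁ Φ₂ : ℝ → ℝ) (hΦ₁ : IsYoung Φ₁) (hΦ₂ : IsYoung Φ₂)
    (φ : Ω → Ω) (hφ : Measurable φ)
    (hns : ∀ A : Set Ω, MeasurableSet A → μ A = 0 → μ (φ ⁻¹' A) = 0)
    (h : Ω → ℝ) (hh : Measurable h) (hh0 : ∀ x, 0 ≤ h x)
    (hRN : ∀ A : Set Ω, MeasurableSet A →
      μ (φ ⁻¹' A) = ∫⁻ x in A, ENNReal.ofReal (h x) ∂μ)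
    (a b : ℝ) (ha : 0 < a) (hb : 0 < b)
    (g : Ω → ℝ) (hg : Integrable g μ) (hg0 : ∀ x, 0 ≤ g x)
    (hcond : ∀ᵐ t ∂μ, ∀ u : ℝ, 0 < u → Φ₂ (a * u) * h t ≤ b * Φ₁ u + g t) :
    ∀ f : Ω → ℂ, MemOrlicz Φ₁ μ f →
      MemOrlicz Φ₂ μ (f ∘ φ) ∧
      luxNorm Φ₂ μ (f ∘ φ) ≤ (max 1 (b + ∫ x, g x ∂μ)) / a * luxNorm Φ₁ μ f := by
  intro f hf
  obtain ⟨hfm, k₀, hk₀, hfin⟩ := hf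
  set M : ℝ := max 1 (b + ∫ x, g x ∂μ) with hMdef
  have hgint : 0 ≤ ∫ x, g x ∂μ := integral_nonneg hg0
  have hM1 : 1 ≤ M := le_max_left _ _
  have hM0 : 0 < M := lt_of_lt_of_le one_pos hM1
  have hr : 0 < M / a := div_pos hM0 ha
  -- the key step
  have hstep : ∀ k : ℝ, 0 < k → orliczModular Φ₁ μ (fun x => f x / (k : ℂ)) ≤ 1 →
      orliczModular Φ₂ μ (fun x => f (φ x) / ((M / a * k : ℝ) : ℂ)) ≤ 1 := by
    intro k hk hmod
    have hrk : 0 < M / a * k := mul_pos hr hk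
    set F : Ω → ℝ≥0∞ := fun x => ENNReal.ofReal (Φ₂ (a * ‖f x‖ / k)) with hFdef
    have hFm : Measurable F := by
      apply Measurable.ennreal_ofReal
      exact hΦ₂.1.measurable.comp
        ((measurable_const.mul (continuous_norm.measurable.comp hfm)).div_const k)
    have hmod' : (∫⁻ x, ENNReal.ofReal (Φ₁ (‖f x‖ / k)) ∂μ) ≤ 1 := by
      have : (fun x => ENNReal.ofReal (Φ₁ (‖f x‖ / k))) =
          fun x => ENNReal.ofReal (Φ₁ (‖f x / (k : ℂ)‖)) := by
        funext x
        rw [norm_div, Complex.norm_real, Real.norm_eq_abs, abs_of_pos hk]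
      rw [this]
      exact hmod
    calc orliczModular Φ₂ μ (fun x => f (φ x) / ((M / a * k : ℝ) : ℂ))
        ≤ ∫⁻ x, ENNReal.ofReal (1 / M) * F (φ x) ∂μ := by
          apply lintegral_mono
          intro x
          dsimp only
          rw [← ENNReal.ofReal_mul (by positivity)]
          apply ENNReal.ofReal_le_ofReal
          have habs : ‖f (φ x) / ((M / a * k : ℝ) : ℂ)‖ =
              1 / M * (a * ‖f (φ x)‖ / k) := by
            rw [norm_div, Complex.norm_real, Real.norm_eq_abs, abs_of_pos hrk]
            field_simp
          rw [habs]
          exact isYoung_scale hΦ₂ (by positivity) (by positivity)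
            ((div_le_one hM0).mpr hM1)
      _ = ENNReal.ofReal (1 / M) * ∫⁻ x, F (φ x) ∂μ :=
          lintegral_const_mul' _ _ ENNReal.ofReal_ne_top
      _ ≤ ENNReal.ofReal (1 / M) * ENNReal.ofReal M := by
          gcongr
          rw [lintegral_comp_eq hφ hh hRN hFm]
          calc ∫⁻ x, ENNReal.ofReal (h x) * F x ∂μ
              ≤ ∫⁻ x, ENNReal.ofReal (b * Φ₁ (‖f x‖ / k) + g x) ∂μ := by
                apply lintegral_mono_ae
                filter_upwards [hcond] with t ht
                by_cases hz : ‖f t‖ = 0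
                · have hF0 : F t = 0 := by
                    simp [hFdef, hz, isYoung_zero hΦ₂]
                  rw [hF0, mul_zero]
                  exact zero_le
                · have hu : 0 < ‖f t‖ / k :=
                    div_pos (lt_of_le_of_ne (norm_nonneg _) (Ne.symm hz)) hk
                  have := ht _ hu
                  have heq : a * ‖f t‖ / k = a * (‖f t‖ / k) := by
                    ring
                  rw [hFdef]
                  simp only [heq]
                  rw [← ENNReal.ofReal_mul (hh0 t)]
                  apply ENNReal.ofReal_le_ofReal
                  calc h t * Φ₂ (a * (‖f t‖ / k))
                      = Φ₂ (a * (‖f t‖ / k)) * h t := by ring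
                    _ ≤ b * Φ₁ (‖f t‖ / k) + g t := this
            _ = (∫⁻ x, ENNReal.ofReal b * ENNReal.ofReal (Φ₁ (‖f x‖ / k)) ∂μ)
                  + ∫⁻ x, ENNReal.ofReal (g x) ∂μ := by
                rw [← lintegral_add_right' _ (hg.aestronglyMeasurable.aemeasurable.ennreal_ofReal)]
                apply lintegral_congr
                intro x
                rw [ENNReal.ofReal_add (mul_nonneg hb.le (hΦ₁.2.2.1 _)) (hg0 x),
                  ENNReal.ofReal_mul hb.le]
            _ ≤ ENNReal.ofReal b * 1 + ENNReal.ofReal (∫ x, g x ∂μ) := by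
                rw [lintegral_const_mul' _ _ ENNReal.ofReal_ne_top,
                  ← ofReal_integral_eq_lintegral_ofReal hg
                    (Filter.Eventually.of_forall hg0)]
                gcongr
            _ = ENNReal.ofReal (b + ∫ x, g x ∂μ) := by
                rw [mul_one, ← ENNReal.ofReal_add hb.le hgint]
            _ ≤ ENNReal.ofReal M := ENNReal.ofReal_le_ofReal (le_max_right _ _)
      _ = 1 := by
          rw [← ENNReal.ofReal_mul (by positivity), one_div_mul_cancel hM0.ne',
            ENNReal.ofReal_one]
  obtain ⟨K, hK, hKmem⟩ := exists_scale_le_one hΦ₁ hk₀ hfin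
  have h12 : ∀ k : ℝ, 0 < k → orliczModular Φ₁ μ (fun x => f x / (k : ℂ)) ≤ 1 →
      (M / a * k) ∈ {k : ℝ | 0 < k ∧
        orliczModular Φ₂ μ (fun x => (f ∘ φ) x / (k : ℂ)) ≤ 1} := by
    intro k hk hm
    exact ⟨mul_pos hr hk, hstep k hk hm⟩
  constructor
  · refine ⟨hfm.comp hφ, 1 / (M / a * K), by positivity, ?_⟩
    have heqf : (fun x => ((1 / (M / a * K) : ℝ) : ℂ) * (f ∘ φ) x) =
        fun x => f (φ x) / ((M / a * K : ℝ) : ℂ) := by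
      funext x
      push_cast
      rw [one_div, inv_mul_eq_div]
      rfl
    rw [heqf]
    exact lt_of_le_of_lt (hstep K hK hKmem) ENNReal.one_lt_top
  · have hS₂bdd : BddBelow {k : ℝ | 0 < k ∧
        orliczModular Φ₂ μ (fun x => (f ∘ φ) x / (k : ℂ)) ≤ 1} :=
      ⟨0, fun x hx => hx.1.le⟩
    have hS₁ne : {k : ℝ | 0 < k ∧
        orliczModular Φ₁ μ (fun x => f x / (k : ℂ)) ≤ 1}.Nonempty := ⟨K, hK, hKmem⟩
    have h2 : luxNorm Φ₂ μ (f ∘ φ) / (M / a) ≤ luxNorm Φ₁ μ f := by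
      apply le_csInf hS₁ne
      intro k hk
      rw [div_le_iff₀ hr]
      calc luxNorm Φ₂ μ (f ∘ φ) ≤ M / a * k := csInf_le hS₂bdd (h12 k hk.1 hk.2)
        _ = k * (M / a) := by ring
    rw [div_le_iff₀ hr] at h2
    calc luxNorm Φ₂ μ (f ∘ φ) ≤ luxNorm Φ₁ μ f * (M / a) := h2
      _ = M / a * luxNorm Φ₁ μ f := by ring
end

section
/- Let (Ω, Σ, μ) be a σ-finite measure space, Φ₁, Φ₂ Young functions, and u: Ω → ℂ measurable. If there exist M > 0 and nonnegative g ∈ L¹(μ) such that Φ₂(|u(x)|·v) ≤ Φ₁(M·v) + g(x) for all v > 0 and μ-almost every x ∈ Ω, then the multiplication operator M_u(f) = u·f is bounded from L^{Φ₁}(μ) to L^{Φ₂}(μ), with N_{Φ₂}(u·f) ≤ M·M'·N_{Φ₁}(f) where M' = max(1, 1 + ∫ g dμ). -/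
open MeasureTheory Filter Set
open scoped ENNReal

private lemma young_zero {Φ : ℝ → ℝ} (h : IsYoung Φ) : Φ 0 = 0 :=
  (h.2.2.2.1 0 le_rfl).2 rfl

private lemma young_scale {Φ : ℝ → ℝ} (h : IsYoung Φ) {t x : ℝ}
    (ht0 : 0 ≤ t) (ht1 : t ≤ 1) (hx : 0 ≤ x) : Φ (t * x) ≤ t * Φ x := by
  have hc := h.2.1
  have h2 := hc.2 (mem_Ici.2 hx) (mem_Ici.2 (le_refl (0:ℝ))) ht0
    (by linarith : (0:ℝ) ≤ 1 - t) (by ring)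
  simpa [smul_eq_mul, young_zero h] using h2

/-- A sufficient condition for boundedness of the multiplication operator `M_u`,
with the explicit bound `N_{Φ₂}(u·f) ≤ M·M'·N_{Φ₁}(f)`, `M' = max 1 (1 + ∫ g)`. -/
theorem stmt2 {Ω : Type*} [MeasurableSpace Ω] (μ : Measure Ω) [SigmaFinite μ]
    (Φ₁ Φ₂ : ℝ → ℝ) (hΦ₁ : IsYoung Φ₁) (hΦ₂ : IsYoung Φ₂)
    (u : Ω → ℂ) (hu : Measurable u)
    (M : ℝ) (hM : 0 < M)
    (g : Ω → ℝ) (hg : Integrable g μ) (hg0 : ∀ x, 0 ≤ g x)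
    (hcond : ∀ᵐ x ∂μ, ∀ v : ℝ, 0 < v →
      Φ₂ (‖u x‖ * v) ≤ Φ₁ (M * v) + g x) :
    ∀ f : Ω → ℂ, MemOrlicz Φ₁ μ f →
      MemOrlicz Φ₂ μ (fun x => u x * f x) ∧
      luxNorm Φ₂ μ (fun x => u x * f x)
        ≤ M * max 1 (1 + ∫ x, g x ∂μ) * luxNorm Φ₁ μ f := by
  have hgint : (0:ℝ) ≤ ∫ x, g x ∂μ := integral_nonneg hg0
  set I : ℝ := ∫ x, g x ∂μ with hI
  have hmax : max 1 (1 + I) = 1 + I := max_eq_right (by linarith)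
  have hM'0 : (0:ℝ) < 1 + I := by linarith
  have hM'1 : (1:ℝ) ≤ 1 + I := by linarith
  intro f hf
  obtain ⟨hfm, k₀, hk₀, hfin⟩ := hf
  -- key estimate: membership in the Luxemburg set transfers
  have key : ∀ k : ℝ, 0 < k → orliczModular Φ₁ μ (fun x => f x / (k : ℂ)) ≤ 1 →
      orliczModular Φ₂ μ (fun x => (u x * f x) / ((M * (1 + I) * k : ℝ) : ℂ)) ≤ 1 := by
    intro k hk hmod
    have hMk : 0 < M * k := mul_pos hM hk
    have hMM'k : 0 < M * (1 + I) * k := by positivity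
    have hpt : ∀ᵐ x ∂μ,
        Φ₂ (‖(u x * f x) / ((M * (1 + I) * k : ℝ) : ℂ)‖)
          ≤ (1 + I)⁻¹ * (Φ₁ (‖f x / (k : ℂ)‖) + g x) := by
      filter_upwards [hcond] with x hx
      rcases eq_or_ne (f x) 0 with h0 | h0
      · have : Φ₂ (‖(u x * f x) / ((M * (1 + I) * k : ℝ) : ℂ)‖) = 0 := by
          simp [h0, young_zero hΦ₂]
        rw [this]
        have h1 : 0 ≤ Φ₁ (‖f x / (k : ℂ)‖) := hΦ₁.2.2.1 _
        have h2 : 0 ≤ g x := hg0 x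
        positivity
      · have hfx : 0 < ‖f x‖ := by
          simpa using (norm_pos_iff.mpr h0)
        set v : ℝ := ‖f x‖ / (M * k) with hv
        have hv0 : 0 < v := by positivity
        have h1 := hx v hv0
        have e1 : ‖(u x * f x) / ((M * (1 + I) * k : ℝ) : ℂ)‖
            = (1 + I)⁻¹ * (‖u x‖ * v) := by
          have hne1 : (1 + I) ≠ 0 := ne_of_gt hM'0
          have hne2 : M ≠ 0 := ne_of_gt hM
          have hne3 : k ≠ 0 := ne_of_gt hk
          rw [norm_div, norm_mul, Complex.norm_real, Real.norm_eq_abs, abs_of_pos hMM'k, hv]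
          field_simp
        have e2 : M * v = ‖f x / (k : ℂ)‖ := by
          have hne2 : M ≠ 0 := ne_of_gt hM
          have hne3 : k ≠ 0 := ne_of_gt hk
          rw [norm_div, Complex.norm_real, Real.norm_eq_abs, abs_of_pos hk, hv]
          field_simp
        rw [e1, ← e2]
        calc Φ₂ ((1 + I)⁻¹ * (‖u x‖ * v))
            ≤ (1 + I)⁻¹ * Φ₂ (‖u x‖ * v) :=
              young_scale hΦ₂ (by positivity) (by
                rw [inv_le_one_iff₀]; right; exact hM'1)
                (by positivity)
          _ ≤ (1 + I)⁻¹ * (Φ₁ (M * v) + g x) :=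
              mul_le_mul_of_nonneg_left h1 (by positivity)
    have hm1 : Measurable fun x => ENNReal.ofReal (Φ₁ (‖f x / (k : ℂ)‖)) := by
      apply ENNReal.measurable_ofReal.comp
      exact hΦ₁.1.measurable.comp (continuous_norm.measurable.comp (hfm.div_const _))
    have hgl : ∫⁻ x, ENNReal.ofReal (g x) ∂μ = ENNReal.ofReal I :=
      (ofReal_integral_eq_lintegral_ofReal hg (Eventually.of_forall hg0)).symm
    calc orliczModular Φ₂ μ (fun x => (u x * f x) / ((M * (1 + I) * k : ℝ) : ℂ))
        ≤ ∫⁻ x, ENNReal.ofReal ((1 + I)⁻¹ * (Φ₁ (‖f x / (k : ℂ)‖) + g x)) ∂μ :=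
          lintegral_mono_ae (hpt.mono fun x h => ENNReal.ofReal_le_ofReal h)
      _ = ∫⁻ x, ENNReal.ofReal ((1 + I)⁻¹) *
            (ENNReal.ofReal (Φ₁ (‖f x / (k : ℂ)‖)) + ENNReal.ofReal (g x)) ∂μ := by
          apply lintegral_congr; intro x
          rw [ENNReal.ofReal_mul (by positivity), ENNReal.ofReal_add (hΦ₁.2.2.1 _) (hg0 x)]
      _ = ENNReal.ofReal ((1 + I)⁻¹) *
            ((∫⁻ x, ENNReal.ofReal (Φ₁ (‖f x / (k : ℂ)‖)) ∂μ) +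
              ∫⁻ x, ENNReal.ofReal (g x) ∂μ) := by
          rw [lintegral_const_mul' _ _ (by simp), lintegral_add_left hm1]
      _ ≤ ENNReal.ofReal ((1 + I)⁻¹) * (1 + ENNReal.ofReal I) := by
          gcongr
          · exact hmod
          · exact hgl.le
      _ = 1 := by
          have h1 : (1 : ℝ≥0∞) + ENNReal.ofReal I = ENNReal.ofReal (1 + I) := by
            rw [ENNReal.ofReal_add zero_le_one hgint, ENNReal.ofReal_one]
          rw [h1, ← ENNReal.ofReal_mul (by positivity), inv_mul_cancel₀ (ne_of_gt hM'0),
            ENNReal.ofReal_one]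
  -- the Luxemburg set of f is nonempty
  have hA : ∃ a : ℝ, 0 < a ∧ orliczModular Φ₁ μ (fun x => f x / (a : ℂ)) ≤ 1 := by
    set C := orliczModular Φ₁ μ (fun x => (k₀ : ℂ) * f x) with hC
    have hCt : C ≠ ⊤ := hfin.ne
    set t : ℝ := (C.toReal + 1)⁻¹ with ht
    have hCtr : 0 ≤ C.toReal := ENNReal.toReal_nonneg
    have ht0 : 0 < t := by positivity
    have ht1 : t ≤ 1 := by
      rw [ht, inv_le_one_iff₀]; right; linarith
    refine ⟨(t * k₀)⁻¹, by positivity, ?_⟩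
    have heq : (fun x => f x / (((t * k₀)⁻¹ : ℝ) : ℂ)) = fun x => ((t * k₀ : ℝ) : ℂ) * f x := by
      funext x
      push_cast
      rw [div_eq_mul_inv, inv_inv, mul_comm]
    rw [heq]
    have hpt : ∀ x, ENNReal.ofReal (Φ₁ (‖((t * k₀ : ℝ) : ℂ) * f x‖))
        ≤ ENNReal.ofReal t * ENNReal.ofReal (Φ₁ (‖(k₀ : ℂ) * f x‖)) := by
      intro x
      rw [← ENNReal.ofReal_mul ht0.le]
      apply ENNReal.ofReal_le_ofReal
      have e1 : ‖((t * k₀ : ℝ) : ℂ) * f x‖ = t * (k₀ * ‖f x‖) := by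
        rw [norm_mul, Complex.norm_real, Real.norm_eq_abs, abs_of_pos (mul_pos ht0 hk₀)]; ring
      have e2 : ‖(k₀ : ℂ) * f x‖ = k₀ * ‖f x‖ := by
        rw [norm_mul, Complex.norm_real, Real.norm_eq_abs, abs_of_pos hk₀]
      rw [e1, e2]
      exact young_scale hΦ₁ ht0.le ht1 (by positivity)
    calc orliczModular Φ₁ μ (fun x => ((t * k₀ : ℝ) : ℂ) * f x)
        ≤ ∫⁻ x, ENNReal.ofReal t * ENNReal.ofReal (Φ₁ (‖(k₀ : ℂ) * f x‖)) ∂μ :=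
          lintegral_mono hpt
      _ = ENNReal.ofReal t * C := by
          rw [lintegral_const_mul' _ _ (by simp)]; rfl
      _ ≤ (C + 1)⁻¹ * (C + 1) := by
          have hof : ENNReal.ofReal t = (C + 1)⁻¹ := by
            rw [ht, ENNReal.ofReal_inv_of_pos (by linarith), ENNReal.ofReal_add hCtr zero_le_one,
              ENNReal.ofReal_toReal hCt, ENNReal.ofReal_one]
          rw [hof]
          exact mul_le_mul_right (le_self_add) _
      _ = 1 := ENNReal.inv_mul_cancel (by simp) (by simp [hCt, lt_top_iff_ne_top])
  obtain ⟨a, ha0, hamod⟩ := hA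
  constructor
  · refine ⟨hu.mul hfm, (M * (1 + I) * a)⁻¹, by positivity, ?_⟩
    have heq : (fun x => (((M * (1 + I) * a)⁻¹ : ℝ) : ℂ) * (u x * f x))
        = fun x => (u x * f x) / ((M * (1 + I) * a : ℝ) : ℂ) := by
      funext x
      push_cast
      rw [div_eq_inv_mul]
    rw [heq]
    exact lt_of_le_of_lt (key a ha0 hamod) ENNReal.one_lt_top
  · rw [hmax]
    have hMM' : (0:ℝ) < M * (1 + I) := by positivity
    set S₂ : Set ℝ := {k : ℝ | 0 < k ∧
      orliczModular Φ₂ μ (fun x => (u x * f x) / (k : ℂ)) ≤ 1} with hS₂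
    set S₁ : Set ℝ := {k : ℝ | 0 < k ∧
      orliczModular Φ₁ μ (fun x => f x / (k : ℂ)) ≤ 1} with hS₁
    have hne₁ : S₁.Nonempty := ⟨a, ha0, hamod⟩
    have hbdd₂ : BddBelow S₂ := ⟨0, fun x hx => hx.1.le⟩
    have h1 : ∀ k ∈ S₁, sInf S₂ ≤ M * (1 + I) * k := by
      intro k hk
      exact csInf_le hbdd₂ ⟨mul_pos hMM' hk.1, key k hk.1 hk.2⟩
    have h2 : sInf S₂ / (M * (1 + I)) ≤ sInf S₁ := by
      apply le_csInf hne₁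
      intro k hk
      rw [div_le_iff₀ hMM', mul_comm]
      exact h1 k hk
    have h3 : sInf S₂ ≤ M * (1 + I) * sInf S₁ := by
      rw [div_le_iff₀ hMM'] at h2
      linarith [h2, mul_comm (sInf S₁) (M * (1 + I))]
    exact h3
end

section
/- Let (Ω, Σ, μ) be a σ-finite measure space, Φ₁ a Young function, and {B_n} a sequence of measurable sets with 0 < μ(B_n) < ∞ and μ(B_n) → 0. Set f_n = χ_{B_n}/N_{Φ₁}(χ_{B_n}). Then for every A ∈ Σ with 0 < μ(A) < ∞, ∫_Ω f_n·χ_A dμ → 0 as n → ∞; in particular, using N_{Φ₁}(χ_{B_n}) = 1/Φ₁⁻¹(1/μ(B_n)), we have ∫ f_n χ_A dμ ≤ Φ₁⁻¹(1/μ(B_n))·μ(B_n) → 0. -/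
open MeasureTheory Filter Set
open scoped ENNReal

/-- The Luxemburg norm for real-valued functions. -/
noncomputable def luxNormR {Ω : Type*} [MeasurableSpace Ω] (Φ : ℝ → ℝ)
    (μ : Measure Ω) (f : Ω → ℝ) : ℝ :=
  sInf {k : ℝ | 0 < k ∧ (∫⁻ x, ENNReal.ofReal (Φ (|f x| / k)) ∂μ) ≤ 1}

lemma young_superlin {Φ : ℝ → ℝ} (hΦ : IsYoung Φ) {ε : ℝ} (hε : 0 < ε) :
    ∃ M : ℝ, 0 < M ∧ ∀ x, M ≤ x → x / ε ≤ Φ x := by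
  obtain ⟨M, hM⟩ := (Filter.eventually_atTop).1 (hΦ.2.2.2.2.2.eventually_ge_atTop (1/ε))
  refine ⟨max M 1, lt_of_lt_of_le one_pos (le_max_right _ _), fun x hx => ?_⟩
  have hx0 : 0 < x := lt_of_lt_of_le one_pos (le_trans (le_max_right _ _) hx)
  have h := hM x (le_trans (le_max_left _ _) hx)
  rw [le_div_iff₀ hx0] at h
  calc x / ε = 1/ε * x := by ring
  _ ≤ Φ x := h

lemma key_tendsto {Φ : ℝ → ℝ} (hΦ : IsYoung Φ) (t c : ℕ → ℝ)
    (htlim : Tendsto t atTop (nhds 0)) (ht0 : ∀ n, 0 ≤ t n) (hc : ∀ n, 0 ≤ c n)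
    (hΦc : ∀ n, Φ (c n) * t n ≤ 1) :
    Tendsto (fun n => c n * t n) atTop (nhds 0) := by
  rw [Metric.tendsto_atTop]
  intro ε hε
  have hε2 : 0 < ε / 2 := by linarith
  obtain ⟨M, hM0, hM⟩ := young_superlin hΦ hε2
  have hεM : 0 < ε / 2 / M := div_pos hε2 hM0
  obtain ⟨N, hN⟩ := (Metric.tendsto_atTop.1 htlim) (ε/2/M) hεM
  refine ⟨N, fun n hn => ?_⟩
  have htn : t n < ε/2/M := by
    have := hN n hn
    rw [Real.dist_eq, sub_zero, abs_of_nonneg (ht0 n)] at this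
    exact this
  have hkey : c n * t n ≤ ε/2 := by
    by_cases hcM : M ≤ c n
    · have h2 := hM (c n) hcM
      have h4 : c n / (ε/2) * t n ≤ 1 :=
        le_trans (mul_le_mul_of_nonneg_right h2 (ht0 n)) (hΦc n)
      have h5 : c n * t n / (ε/2) ≤ 1 := by
        rw [show c n * t n / (ε/2) = c n / (ε/2) * t n by ring]; exact h4
      linarith [(div_le_one hε2).1 h5]
    · push_neg at hcM
      calc c n * t n ≤ M * t n := mul_le_mul_of_nonneg_right hcM.le (ht0 n)
      _ ≤ M * (ε/2/M) := mul_le_mul_of_nonneg_left htn.le hM0.le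
      _ = ε/2 := by field_simp
  rw [Real.dist_eq, sub_zero, abs_of_nonneg (mul_nonneg (hc n) (ht0 n))]
  linarith

lemma indicator_lintegral {Ω : Type*} [MeasurableSpace Ω] (μ : Measure Ω) {Φ : ℝ → ℝ}
    (hΦ0 : Φ 0 = 0) {Bs : Set Ω} (hB : MeasurableSet Bs) (k : ℝ) :
    (∫⁻ x, ENNReal.ofReal (Φ (|Bs.indicator (fun _ => (1:ℝ)) x| / k)) ∂μ)
      = ENNReal.ofReal (Φ (1 / k)) * μ Bs := by
  have heq : ∀ x, ENNReal.ofReal (Φ (|Bs.indicator (fun _ => (1:ℝ)) x| / k))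
      = Bs.indicator (fun _ => ENNReal.ofReal (Φ (1 / k))) x := by
    intro x
    by_cases hx : x ∈ Bs <;> simp [hx, hΦ0]
  rw [lintegral_congr heq, lintegral_indicator hB, setLIntegral_const]

lemma integral_indicator_div {Ω : Type*} [MeasurableSpace Ω] (μ : Measure Ω)
    {A Bs : Set Ω} (hB : MeasurableSet Bs) (L : ℝ) :
    (∫ x in A, Bs.indicator (fun _ => (1:ℝ)) x / L ∂μ) = (μ (A ∩ Bs)).toReal / L := by
  rw [integral_div, setIntegral_indicator hB]
  simp
  rfl

/-- If `μ(B n) → 0` and `f n = χ_{B n} / N_{Φ₁}(χ_{B n})`, then `∫_A f n dμ → 0` for every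
set `A` of finite positive measure; moreover, via the formula
`N_{Φ₁}(χ_B) = 1/Φ₁⁻¹(1/μ(B))`, one has `∫_A f n dμ ≤ Φ₁⁻¹(1/μ(B n))·μ(B n) → 0`. -/
theorem stmt19 {Ω : Type*} [MeasurableSpace Ω] (μ : Measure Ω) [SigmaFinite μ]
    (Φ₁ : ℝ → ℝ) (hΦ₁ : IsYoung Φ₁)
    (B : ℕ → Set Ω) (hBmeas : ∀ n, MeasurableSet (B n))
    (hBpos : ∀ n, 0 < μ (B n)) (hBfin : ∀ n, μ (B n) < ⊤)
    (hBlim : Tendsto (fun n => μ (B n)) atTop (nhds 0)) :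
    (∀ A : Set Ω, MeasurableSet A → 0 < μ A → μ A < ⊤ →
      Tendsto (fun n => ∫ x in A,
          (B n).indicator (fun _ => (1 : ℝ)) x
            / luxNormR Φ₁ μ ((B n).indicator fun _ => (1 : ℝ)) ∂μ)
        atTop (nhds 0)) ∧
    (∀ Ψ : ℝ → ℝ, (∀ y : ℝ, 0 ≤ y → Φ₁ (Ψ y) = y ∧ 0 ≤ Ψ y) →
      (∀ n, luxNormR Φ₁ μ ((B n).indicator fun _ => (1 : ℝ))
          = 1 / Ψ (1 / (μ (B n)).toReal)) →
      (∀ A : Set Ω, MeasurableSet A → 0 < μ A → μ A < ⊤ → ∀ n,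
        (∫ x in A,
          (B n).indicator (fun _ => (1 : ℝ)) x
            / luxNormR Φ₁ μ ((B n).indicator fun _ => (1 : ℝ)) ∂μ)
          ≤ Ψ (1 / (μ (B n)).toReal) * (μ (B n)).toReal) ∧
      Tendsto (fun n => Ψ (1 / (μ (B n)).toReal) * (μ (B n)).toReal)
        atTop (nhds 0)) := by
  have hΦnn : ∀ x, 0 ≤ Φ₁ x := hΦ₁.2.2.1
  have hΦ0 : Φ₁ 0 = 0 := (hΦ₁.2.2.2.1 0 le_rfl).2 rfl
  have htpos : ∀ n, 0 < (μ (B n)).toReal :=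
    fun n => ENNReal.toReal_pos (hBpos n).ne' (hBfin n).ne
  have htlim : Tendsto (fun n => (μ (B n)).toReal) atTop (nhds 0) := by
    have h := (ENNReal.tendsto_toReal (by simp : (0:ℝ≥0∞) ≠ ⊤)).comp hBlim
    exact h
  have hLnn : ∀ n, 0 ≤ luxNormR Φ₁ μ ((B n).indicator fun _ => (1:ℝ)) :=
    fun n => Real.sInf_nonneg (fun k hk => hk.1.le)
  have hmem : ∀ n k, 0 < k →
      (∫⁻ x, ENNReal.ofReal (Φ₁ (|((B n).indicator fun _ => (1:ℝ)) x| / k)) ∂μ) ≤ 1 →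
      Φ₁ (1/k) * (μ (B n)).toReal ≤ 1 := by
    intro n k hk h
    rw [indicator_lintegral μ hΦ0 (hBmeas n) k] at h
    have h2 := ENNReal.toReal_mono (by simp : (1:ℝ≥0∞) ≠ ⊤) h
    rw [ENNReal.toReal_mul, ENNReal.toReal_ofReal (hΦnn _)] at h2
    simpa using h2
  have hratio : Tendsto
      (fun n => (μ (B n)).toReal / luxNormR Φ₁ μ ((B n).indicator fun _ => (1:ℝ)))
      atTop (nhds 0) := by
    rw [Metric.tendsto_atTop]
    intro ε hε
    have hε2 : 0 < ε/2 := by linarith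
    obtain ⟨M, hM0, hM⟩ := young_superlin hΦ₁ hε2
    obtain ⟨N, hN⟩ := Metric.tendsto_atTop.1 htlim (ε/2/M) (div_pos hε2 hM0)
    refine ⟨N, fun n hn => ?_⟩
    have htn : (μ (B n)).toReal < ε/2/M := by
      have := hN n hn
      rwa [Real.dist_eq, sub_zero, abs_of_nonneg (htpos n).le] at this
    set S : Set ℝ := {k : ℝ | 0 < k ∧
      (∫⁻ x, ENNReal.ofReal (Φ₁ (|((B n).indicator fun _ => (1:ℝ)) x| / k)) ∂μ) ≤ 1}
      with hSdef
    have hLdef : luxNormR Φ₁ μ ((B n).indicator fun _ => (1:ℝ)) = sInf S := rfl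
    have hlb : ∀ k ∈ S, (μ (B n)).toReal / (ε/2) ≤ k := by
      intro k hk
      obtain ⟨hk0, hk1⟩ := hk
      have hb := hmem n k hk0 hk1
      by_cases hMk : M ≤ 1/k
      · have h2 := hM (1/k) hMk
        have h4 : 1/k / (ε/2) * (μ (B n)).toReal ≤ 1 :=
          le_trans (mul_le_mul_of_nonneg_right h2 (htpos n).le) hb
        have h5 : (μ (B n)).toReal / (k * (ε/2)) ≤ 1 := by
          rw [show (μ (B n)).toReal / (k * (ε/2)) = 1/k / (ε/2) * (μ (B n)).toReal by ring]
          exact h4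
        rw [div_le_iff₀ hε2]
        exact (div_le_one (mul_pos hk0 hε2)).1 h5
      · push_neg at hMk
        rw [div_le_iff₀ hε2]
        have h1 : 1 < M * k := by
          rw [div_lt_iff₀ hk0] at hMk; linarith
        nlinarith [mul_lt_mul_of_pos_left ((lt_div_iff₀ hM0).1 htn) hk0,
          mul_lt_mul_of_pos_left h1 (htpos n)]
    rw [Real.dist_eq, sub_zero,
      abs_of_nonneg (div_nonneg (htpos n).le (hLnn n))]
    by_cases hne : S.Nonempty
    · have hLlb : (μ (B n)).toReal / (ε/2) ≤ sInf S := le_csInf hne hlb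
      have hLpos : 0 < sInf S := lt_of_lt_of_le (div_pos (htpos n) hε2) hLlb
      rw [hLdef, div_lt_iff₀ hLpos]
      have h6 : (μ (B n)).toReal ≤ ε/2 * sInf S := by
        have h7 := mul_le_mul_of_nonneg_left hLlb hε2.le
        have h8 : ε/2 * ((μ (B n)).toReal / (ε/2)) = (μ (B n)).toReal := by
          rw [mul_comm, div_mul_cancel₀ _ hε2.ne']
        linarith [h8 ▸ h7]
      nlinarith [mul_pos hε2 hLpos]
    · rw [not_nonempty_iff_eq_empty] at hne
      rw [hLdef, hne, Real.sInf_empty, div_zero]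
      exact hε
  constructor
  · intro A hA hApos hAfin
    have hnn : ∀ n, 0 ≤ ∫ x in A, (B n).indicator (fun _ => (1:ℝ)) x
        / luxNormR Φ₁ μ ((B n).indicator fun _ => (1:ℝ)) ∂μ := by
      intro n
      rw [integral_indicator_div μ (hBmeas n)]
      exact div_nonneg ENNReal.toReal_nonneg (hLnn n)
    have hub : ∀ n, (∫ x in A, (B n).indicator (fun _ => (1:ℝ)) x
        / luxNormR Φ₁ μ ((B n).indicator fun _ => (1:ℝ)) ∂μ)
        ≤ (μ (B n)).toReal / luxNormR Φ₁ μ ((B n).indicator fun _ => (1:ℝ)) := by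
      intro n
      rw [integral_indicator_div μ (hBmeas n), div_eq_mul_inv, div_eq_mul_inv]
      exact mul_le_mul_of_nonneg_right
        (ENNReal.toReal_mono (hBfin n).ne (measure_mono inter_subset_right))
        (inv_nonneg.2 (hLnn n))
    exact squeeze_zero hnn hub hratio
  · intro Ψ hΨ hform
    constructor
    · intro A hA hApos hAfin n
      rw [integral_indicator_div μ (hBmeas n), hform n, one_div, div_eq_mul_inv, inv_inv]
      have hΨnn := (hΨ (1 / (μ (B n)).toReal) (by positivity)).2
      calc (μ (A ∩ B n)).toReal * Ψ (1 / (μ (B n)).toReal)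
          ≤ (μ (B n)).toReal * Ψ (1 / (μ (B n)).toReal) :=
            mul_le_mul_of_nonneg_right
              (ENNReal.toReal_mono (hBfin n).ne (measure_mono inter_subset_right)) hΨnn
        _ = Ψ (1 / (μ (B n)).toReal) * (μ (B n)).toReal := mul_comm _ _
    · refine key_tendsto hΦ₁ _ _ htlim (fun n => (htpos n).le)
        (fun n => (hΨ _ (by positivity)).2) (fun n => ?_)
      rw [(hΨ _ (by positivity)).1, one_div, inv_mul_cancel₀ (htpos n).ne']
end
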